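/- Let (S,·) be an arbitrary semigroup, let A ⊆ S be a SCR-set in S, and let l ∈ ℕ. Then the set D = {(a₁,a₂,d) ∈ S × S × S : for every t ∈ {1,2,...,l}, a₁·d^t·a₂ ∈ A} is a CR-set in the semigroup S × S × S (with coordinatewise multiplication), where d^t denotes the t-fold product d·d···d. -/

import Mathlib

/-- `A` is a strong combinatorially rich set (SCR-set) in the semigroup `S`. -/
def IsSCRSet {S : Type*} [Semigroup S] (A : Set S) : Prop :=
  ∀ k : ℕ, ∃ r : ℕ, ∀ F : Finset (ℕ → S), F.card ≤ k →
    ∃ a₁ a₂ : S, ∃ t ≤ r, ∀ f ∈ F, a₁ * f t * a₂ ∈ A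

/-- `A` is a combinatorially rich set (CR-set) in the semigroup `S`. -/
def IsCRSet {S : Type*} [Semigroup S] (A : Set S) : Prop :=
  ∀ k : ℕ, ∃ r m : ℕ, 0 < m ∧
    ∀ F : Finset (ℕ → S), F.card ≤ k →
      ∃ a : Fin (m + 1) → S, ∃ t : Fin m → ℕ, StrictMono t ∧ (∀ i, t i ≤ r) ∧
        ∀ f ∈ F,
          (List.ofFn fun i : Fin m => a i.castSucc * f (t i)).foldr (· * ·) (a (Fin.last m)) ∈ A

/-- `powSucc n d = d^(n+1)`, the `(n+1)`-fold product `d · d ⋯ d`. -/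
def powSucc {S : Type*} [Semigroup S] : ℕ → S → S
  | 0, d => d
  | n + 1, d => powSucc n d * d

/-!
Conjugating the triple `x = (x₁, x₂, x₃)` by the constants `(a₁, c, c)` and `(c, a₂, c)` gives
`(a₁ x₁ c, c x₂ a₂, c x₃ c)`, and the progression condition on this triple at step `s` reads
`a₁ · (x₁ · c (c x₃ c)^(s+1) c · x₂) · a₂ ∈ A`. So it suffices to apply the SCR property of `A` once
to the `k · l` sequences `t ↦ x₁(t) · c (c x₃(t) c)^(s+1) c · x₂(t)`, one for each `x ∈ F` and `s < l`.
This shows that the set of progressions is itself an SCR-set, and every SCR-set is a CR-set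
(take `m = 1`).
-/

namespace IsSCRSet

variable {S : Type*} [Semigroup S] {A : Set S}

theorem nonempty (hA : IsSCRSet A) : Nonempty S := by
  obtain ⟨r, hr⟩ := hA 0
  obtain ⟨c, -⟩ := hr ∅ le_rfl
  exact ⟨c⟩

theorem exists_forall_mem_of_card_le (hA : IsSCRSet A) (k : ℕ) :
    ∃ r : ℕ, ∀ {ι : Type*} (s : Finset ι) (f : ι → ℕ → S), s.card ≤ k →
      ∃ a₁ a₂ : S, ∃ t ≤ r, ∀ i ∈ s, a₁ * f i t * a₂ ∈ A := by
  classical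
  obtain ⟨r, hr⟩ := hA k
  refine ⟨r, fun s f hs => ?_⟩
  obtain ⟨a₁, a₂, t, ht, hmem⟩ := hr (s.image f) (Finset.card_image_le.trans hs)
  exact ⟨a₁, a₂, t, ht, fun i hi => hmem _ (Finset.mem_image_of_mem f hi)⟩

theorem isCRSet (hA : IsSCRSet A) : IsCRSet A := by
  intro k
  obtain ⟨r, hr⟩ := hA k
  refine ⟨r, 1, one_pos, fun F hF => ?_⟩
  obtain ⟨a₁, a₂, t, ht, hmem⟩ := hr F hF
  refine ⟨![a₁, a₂], ![t], Subsingleton.strictMono _, fun _ => by simpa using ht, fun f hf => ?_⟩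
  simpa [List.ofFn_succ, mul_assoc] using hmem f hf

end IsSCRSet

theorem isSCRSet_progressions {S : Type*} [Semigroup S] {A : Set S} (hA : IsSCRSet A) (l : ℕ) :
    IsSCRSet {x : S × S × S | ∀ t : ℕ, t < l → x.1 * powSucc t x.2.2 * x.2.1 ∈ A} := by
  intro k
  obtain ⟨c⟩ := hA.nonempty
  obtain ⟨r, hr⟩ := hA.exists_forall_mem_of_card_le (k * l)
  refine ⟨r, fun F hF => ?_⟩
  have hcard : (F ×ˢ Finset.range l).card ≤ k * l := by
    rw [Finset.card_product, Finset.card_range]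
    exact Nat.mul_le_mul_right l hF
  obtain ⟨a₁, a₂, t, ht, hmem⟩ := hr (F ×ˢ Finset.range l)
    (fun p u => (p.1 u).1 * (c * powSucc p.2 (c * (p.1 u).2.2 * c) * c) * (p.1 u).2.1) hcard
  refine ⟨(a₁, c, c), (c, a₂, c), t, ht, fun f hf s hs => ?_⟩
  simpa [mul_assoc] using hmem (f, s) (Finset.mem_product.mpr ⟨hf, Finset.mem_range.mpr hs⟩)

/-- If `A` is a SCR-set in a semigroup `S` and `l ∈ ℕ`, then
`D = {(a₁, a₂, d) : a₁ dᵗ a₂ ∈ A for all t ∈ {1, …, l}}` is a CR-set in `S × S × S`. -/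
theorem abundance_of_long_progressions_in_SCR {S : Type*} [Semigroup S] (A : Set S)
    (hA : IsSCRSet A) (l : ℕ) :
    IsCRSet {x : S × S × S | ∀ t : ℕ, t < l → x.1 * powSucc t x.2.2 * x.2.1 ∈ A} :=
  (isSCRSet_progressions hA l).isCRSet
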